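/- arXiv:2602.15377 — 2 statements merged into one kernel-verified Lean document; each statement's English description precedes it below -/
import Mathlib

section
/- In the greedy algorithm for weighted set cover that at each step picks the set maximizing (newly covered elements)/(cost), if at some step the uncovered set U is nonempty and the optimal solution OPT covers U with total cost c(OPT), then there exists an available set D_j with |S_j ∩ U|/c_j ≥ |U|/c(OPT). -/
open Finset

theorem Finset.card_le_sum_card_inter_of_subset_biUnion {N ι : Type*} [DecidableEq ι]
    {s : Finset N} {S : N → Finset ι} {U : Finset ι} (hcov : U ⊆ s.biUnion S) :
    #U ≤ ∑ j ∈ s, #(S j ∩ U) := by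
  have hU : U ⊆ s.biUnion fun j ↦ S j ∩ U := fun x hx ↦ by
    obtain ⟨j, hj, hxj⟩ := mem_biUnion.mp (hcov hx)
    exact mem_biUnion.mpr ⟨j, hj, mem_inter.mpr ⟨hxj, hx⟩⟩
  exact (card_le_card hU).trans card_biUnion_le

theorem Finset.exists_div_le_div_of_le_sum {N 𝕜 : Type*} [Field 𝕜] [LinearOrder 𝕜]
    [IsStrictOrderedRing 𝕜] {s : Finset N} {a c : N → 𝕜} {A : 𝕜}
    (hc : ∀ j ∈ s, 0 < c j) (hpos : 0 < ∑ j ∈ s, c j) (hA : A ≤ ∑ j ∈ s, a j) :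
    ∃ j ∈ s, A / ∑ i ∈ s, c i ≤ a j / c j := by
  have hs : s.Nonempty := nonempty_of_sum_ne_zero hpos.ne'
  have htotal : ∑ j ∈ s, A / (∑ i ∈ s, c i) * c j ≤ ∑ j ∈ s, a j := by
    rwa [← mul_sum, div_mul_cancel₀ _ hpos.ne']
  obtain ⟨j, hj, hle⟩ := exists_le_of_sum_le hs htotal
  exact ⟨j, hj, (le_div_iff₀ (hc j hj)).mpr hle⟩

theorem greedy_step_density_general {N ι : Type*} [DecidableEq ι]
    (S : N → Finset ι) (c : N → ℝ) (hc : ∀ i, 0 < c i)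
    (U : Finset ι) (OPT : Finset N)
    (hcov : U ⊆ OPT.biUnion S) (hpos : 0 < ∑ i ∈ OPT, c i) :
    ∃ j ∈ OPT, (U.card : ℝ) / (∑ i ∈ OPT, c i) ≤ ((S j ∩ U).card : ℝ) / c j :=
  exists_div_le_div_of_le_sum (fun j _ ↦ hc j) hpos
    (mod_cast card_le_sum_card_inter_of_subset_biUnion hcov)

/-- In the weighted greedy step: if `U` is nonempty and `OPT` covers `U` with total cost
`c(OPT) > 0`, then some set `S_j` with `j ∈ OPT` satisfies `|S_j ∩ U|/c_j ≥ |U|/c(OPT)`. -/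
theorem greedy_step_density {N ι : Type*} [DecidableEq ι]
    (S : N → Finset ι) (c : N → ℝ) (hc : ∀ i, 0 < c i)
    (U : Finset ι) (hU : U.Nonempty) (OPT : Finset N)
    (hcov : U ⊆ OPT.biUnion S) (hpos : 0 < ∑ i ∈ OPT, c i) :
    ∃ j ∈ OPT, (U.card : ℝ) / (∑ i ∈ OPT, c i) ≤ ((S j ∩ U).card : ℝ) / c j :=
  greedy_step_density_general S c hc U OPT hcov hpos
end

section
/- If a fractional LP solution satisfies ∑_{i : ι ∈ S_i} x_i* ≥ 1 for an element ι, and each set D_i containing ι is independently included with probability min(1, α·x_i*), then the probability that ι is not covered is at most e^{−α}. -/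
open Finset Real

/-! Each factor satisfies `1 - min 1 t ≤ e^{-t}` (from `1 - t ≤ e^{-t}` when `t ≤ 1`, and trivially
otherwise), so the product is at most `e^{-α ∑ x_i} ≤ e^{-α}` by the covering constraint. -/

theorem one_sub_min_one_le_exp_neg (t : ℝ) : 1 - min 1 t ≤ exp (-t) := by
  rcases le_total t 1 with ht | ht
  · rw [min_eq_right ht]
    exact one_sub_le_exp_neg t
  · rw [min_eq_left ht, sub_self]
    exact (exp_pos _).le

theorem prod_one_sub_min_one_le_exp_neg_sum {κ : Type*} (s : Finset κ) (t : κ → ℝ) :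
    ∏ i ∈ s, (1 - min 1 (t i)) ≤ exp (-∑ i ∈ s, t i) := by
  rw [← sum_neg_distrib, exp_sum]
  exact prod_le_prod (fun i _ => sub_nonneg.mpr (min_le_left _ _))
    (fun i _ => one_sub_min_one_le_exp_neg (t i))

theorem rounding_uncovered_prob_general {N I : Type*} [Fintype N]
    (S : N → Finset I) (ι : I) [DecidablePred fun i => ι ∈ S i]
    (x : N → ℝ) (α : ℝ) (hα : 0 ≤ α)
    (hcov : 1 ≤ ∑ i ∈ Finset.univ.filter (fun i => ι ∈ S i), x i) :
    ∏ i ∈ Finset.univ.filter (fun i => ι ∈ S i), (1 - min 1 (α * x i))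
      ≤ Real.exp (-α) := by
  calc ∏ i ∈ univ.filter (fun i => ι ∈ S i), (1 - min 1 (α * x i))
      ≤ exp (-∑ i ∈ univ.filter (fun i => ι ∈ S i), α * x i) :=
        prod_one_sub_min_one_le_exp_neg_sum _ _
    _ = exp (-(α * ∑ i ∈ univ.filter (fun i => ι ∈ S i), x i)) := by rw [mul_sum]
    _ ≤ exp (-α) := exp_le_exp.mpr (by nlinarith)

/-- If the LP covering constraint `∑_{i : ι ∈ S_i} x_i* ≥ 1` holds and each set
containing `ι` is included independently with probability `min(1, α·x_i*)`, then the
probability that `ι` is uncovered, `∏_{i : ι ∈ S_i} (1 − min(1, α·x_i*))`,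
is at most `e^{−α}`. -/
theorem rounding_uncovered_prob {N I : Type*} [Fintype N]
    (S : N → Finset I) (ι : I) [DecidablePred fun i => ι ∈ S i]
    (x : N → ℝ) (hx : ∀ i, 0 ≤ x i ∧ x i ≤ 1) (α : ℝ) (hα : 0 ≤ α)
    (hcov : 1 ≤ ∑ i ∈ Finset.univ.filter (fun i => ι ∈ S i), x i) :
    ∏ i ∈ Finset.univ.filter (fun i => ι ∈ S i), (1 - min 1 (α * x i))
      ≤ Real.exp (-α) :=
  rounding_uncovered_prob_general S ι x α hα hcov
end
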